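/- arXiv:2108.00592 — 2 statements merged into one kernel-verified Lean document; each statement's English description precedes it below -/
import Mathlib

section
/- Let p be an odd prime and let G be a simple graph on n vertices with adjacency matrix A, det W(G) ≠ 0 and rank_p W(G) = n−1. Let Q ∈ Q(G) with level ℓ and suppose p | ℓ. For an integer t set φ(x,t) = det(xI − A − tJ), where J is the all-ones matrix. Then there exists an integer t_0 such that φ(x, t_0) ≡ 0 (mod p) does not have two distinct roots in F_p. -/
open Matrix Polynomial
open scoped Classical

noncomputable section

/-- The adjacency matrix of a simple graph on `Fin n`, with integer entries. -/
def adjMat (n : ℕ) (G : SimpleGraph (Fin n)) : Matrix (Fin n) (Fin n) ℤ :=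
  Matrix.of fun i j => if G.Adj i j then 1 else 0

/-- The walk matrix `W = [e, Ae, ..., A^{n-1}e]` of a matrix `A`. -/
def walkMat {n : ℕ} (A : Matrix (Fin n) (Fin n) ℤ) : Matrix (Fin n) (Fin n) ℤ :=
  Matrix.of fun i j => ((A ^ (j : ℕ)) *ᵥ fun _ => (1 : ℤ)) i

/-- Membership in `Q(G)`: `Q` is a regular rational orthogonal matrix such that
`Qᵀ A Q` is a 0-1 matrix. -/
def inQSet {n : ℕ} (A : Matrix (Fin n) (Fin n) ℤ) (Q : Matrix (Fin n) (Fin n) ℚ) : Prop :=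
  Qᵀ * Q = 1 ∧ (Q *ᵥ fun _ => (1 : ℚ)) = (fun _ => 1) ∧
  ∀ i j, (Qᵀ * A.map (Int.cast : ℤ → ℚ) * Q) i j = 0 ∨
         (Qᵀ * A.map (Int.cast : ℤ → ℚ) * Q) i j = 1

/-- `ℓ` is the level of the rational matrix `Q`: the smallest positive integer `k`
such that `k • Q` is an integral matrix. -/
def IsLevel {n : ℕ} (Q : Matrix (Fin n) (Fin n) ℚ) (ℓ : ℕ) : Prop :=
  0 < ℓ ∧ (∀ i j, ∃ z : ℤ, (ℓ : ℚ) * Q i j = z) ∧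
  ∀ k : ℕ, 0 < k → (∀ i j, ∃ z : ℤ, (k : ℚ) * Q i j = z) → ℓ ≤ k

/-- The all-ones matrix `J`. -/
def allOnes (n : ℕ) : Matrix (Fin n) (Fin n) ℤ :=
  Matrix.of fun _ _ => 1

/-!
Work over `𝔽_p` with `A` symmetric and `W = W(A)`. An eigenvector `u` of `A` with `eᵀu = 0`
satisfies `(Aʲe)ᵀu = eᵀAʲu = 0`, so it lies in `ker Wᵀ`, which has dimension `≤ 1` when
`rank W = n - 1`; hence at most one eigenvalue `λ` has an eigenvector orthogonal to `e`.
For `μ ≠ λ`, a root `μ` of `det(xI - A - tJ)` yields `u` with `eᵀu = 1` and `(μI - A)u = te`,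
and for two such pairs `(t₁, u₁)`, `(t₂, u₂)` symmetry gives `t₁ = u₂ᵀ(μI - A)u₁ = t₂`.
If every `φ(·, t)` had two distinct roots, choosing one `≠ λ` for each `t` would inject `𝔽_p`
into `𝔽_p ∖ {λ}`.
-/

namespace Matrix

section Walk

variable {R S : Type*} [CommSemiring R] [CommSemiring S] {n : ℕ}

def walkMatrix (B : Matrix (Fin n) (Fin n) R) : Matrix (Fin n) (Fin n) R :=
  of fun i j => (B ^ (j : ℕ) *ᵥ fun _ => 1) i

lemma walkMatrix_map (f : R →+* S) (B : Matrix (Fin n) (Fin n) R) :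
    (walkMatrix B).map f = walkMatrix (B.map f) := by
  ext i j
  have hpow : (B ^ (j : ℕ)).map f = B.map f ^ (j : ℕ) := map_pow f.mapMatrix B j
  simp only [walkMatrix, map_apply, of_apply, RingHom.map_mulVec, ← hpow, Function.comp_def,
    map_one]

end Walk

section Eigen

variable {K : Type*} [Field K]

lemma pow_mulVec_of_mulVec_eq_smul {ι : Type*} [Fintype ι] [DecidableEq ι]
    {B : Matrix ι ι K} {μ : K} {u : ι → K} (hu : B *ᵥ u = μ • u) (j : ℕ) :
    B ^ j *ᵥ u = μ ^ j • u := by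
  induction j with
  | zero => simp
  | succ j ih => rw [pow_succ', ← mulVec_mulVec, ih, mulVec_smul, hu, smul_smul, ← pow_succ]

variable {n : ℕ}

lemma transpose_walkMatrix_mulVec_eq_zero {B : Matrix (Fin n) (Fin n) K} (hB : Bᵀ = B)
    {μ : K} {u : Fin n → K} (hu : B *ᵥ u = μ • u) (he : (fun _ => 1) ⬝ᵥ u = 0) :
    (walkMatrix B)ᵀ *ᵥ u = 0 := by
  ext j
  calc ((walkMatrix B)ᵀ *ᵥ u) j = (B ^ (j : ℕ) *ᵥ fun _ => 1) ⬝ᵥ u := rfl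
    _ = (fun _ => 1) ⬝ᵥ (B ^ (j : ℕ) *ᵥ u) := by
        rw [dotProduct_mulVec, ← mulVec_transpose, transpose_pow, hB, dotProduct_comm]
    _ = 0 := by rw [pow_mulVec_of_mulVec_eq_smul hu, dotProduct_smul, he, smul_zero]

lemma finrank_ker_transpose_mulVecLin_le_one {M : Matrix (Fin n) (Fin n) K}
    (hM : M.rank = n - 1) : Module.finrank K (LinearMap.ker Mᵀ.mulVecLin) ≤ 1 := by
  have := LinearMap.finrank_range_add_finrank_ker Mᵀ.mulVecLin
  have hr : Module.finrank K (LinearMap.range Mᵀ.mulVecLin) = n - 1 := by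
    rw [← hM, ← rank_transpose M]; rfl
  simp only [Module.finrank_fin_fun] at this
  omega

def HasEigenvectorOrthOnes {ι : Type*} [Fintype ι] (B : Matrix ι ι K) (μ : K) : Prop :=
  ∃ u ≠ 0, B *ᵥ u = μ • u ∧ (fun _ => 1) ⬝ᵥ u = 0

lemma mulVec_eq_smul_of_mulVec_smul_eq {ι : Type*} [Fintype ι] {B : Matrix ι ι K} {μ c : K}
    {v : ι → K} (hc : c • v ≠ 0) (h : B *ᵥ (c • v) = μ • c • v) : B *ᵥ v = μ • v := by
  have hc0 : c ≠ 0 := left_ne_zero_of_smul hc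
  rw [mulVec_smul, smul_comm] at h
  exact smul_right_injective _ hc0 h

theorem subsingleton_setOf_hasEigenvectorOrthOnes {B : Matrix (Fin n) (Fin n) K} (hB : Bᵀ = B)
    (hr : (walkMatrix B).rank = n - 1) : {μ | HasEigenvectorOrthOnes B μ}.Subsingleton := by
  rintro μ₁ ⟨u₁, hu₁, hBu₁, he₁⟩ μ₂ ⟨u₂, hu₂, hBu₂, he₂⟩
  obtain ⟨v, hv⟩ := finrank_le_one_iff.mp (finrank_ker_transpose_mulVecLin_le_one hr)
  obtain ⟨c₁, hc₁⟩ := hv ⟨u₁, transpose_walkMatrix_mulVec_eq_zero hB hBu₁ he₁⟩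
  obtain ⟨c₂, hc₂⟩ := hv ⟨u₂, transpose_walkMatrix_mulVec_eq_zero hB hBu₂ he₂⟩
  rw [Subtype.ext_iff, Submodule.coe_smul] at hc₁ hc₂
  subst hc₁ hc₂
  have h₁ := mulVec_eq_smul_of_mulVec_smul_eq hu₁ hBu₁
  have h₂ := mulVec_eq_smul_of_mulVec_smul_eq hu₂ hBu₂
  have hv0 : (v : Fin n → K) ≠ 0 := right_ne_zero_of_smul hu₁
  exact smul_left_injective K hv0 (h₁.symm.trans h₂)

section Shift

variable {ι : Type*} [Fintype ι]

lemma of_one_mulVec (v : ι → K) :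
    (of fun _ _ => 1 : Matrix ι ι K) *ᵥ v = ((fun _ => 1) ⬝ᵥ v) • fun _ => 1 := by
  ext i
  simp [mulVec, dotProduct]

variable [DecidableEq ι]

lemma exists_one_dotProduct_eq_one_of_isRoot_charpoly {B : Matrix ι ι K} {μ t : K}
    (hμ : ¬ HasEigenvectorOrthOnes B μ) (h : (B + t • of fun _ _ => 1).charpoly.IsRoot μ) :
    ∃ u, (fun _ => 1) ⬝ᵥ u = 1 ∧ (μ • (1 : Matrix ι ι K) - B) *ᵥ u = t • fun _ => 1 := by
  rw [IsRoot, eval_charpoly, scalar_apply, ← smul_one_eq_diagonal,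
    ← exists_mulVec_eq_zero_iff] at h
  obtain ⟨v, hv, hCv⟩ := h
  rw [sub_add_eq_sub_sub, sub_mulVec, smul_mulVec, of_one_mulVec, smul_smul, sub_eq_zero] at hCv
  set a := (fun _ => (1 : K)) ⬝ᵥ v
  have ha : a ≠ 0 := fun ha => hμ ⟨v, hv, by
    rwa [ha, mul_zero, zero_smul, sub_mulVec, smul_mulVec, one_mulVec, sub_eq_zero,
      eq_comm] at hCv, ha⟩
  refine ⟨a⁻¹ • v, by rw [dotProduct_smul, smul_eq_mul, inv_mul_cancel₀ ha], ?_⟩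
  rw [mulVec_smul, hCv, smul_smul, mul_left_comm, inv_mul_cancel₀ ha, mul_one]

theorem eq_of_isRoot_charpoly_add_smul {B : Matrix ι ι K} (hB : Bᵀ = B) {μ t₁ t₂ : K}
    (hμ : ¬ HasEigenvectorOrthOnes B μ) (h₁ : (B + t₁ • of fun _ _ => 1).charpoly.IsRoot μ)
    (h₂ : (B + t₂ • of fun _ _ => 1).charpoly.IsRoot μ) : t₁ = t₂ := by
  obtain ⟨u₁, he₁, hu₁⟩ := exists_one_dotProduct_eq_one_of_isRoot_charpoly hμ h₁
  obtain ⟨u₂, he₂, hu₂⟩ := exists_one_dotProduct_eq_one_of_isRoot_charpoly hμ h₂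
  have hC : (μ • (1 : Matrix ι ι K) - B)ᵀ = μ • (1 : Matrix ι ι K) - B := by
    rw [transpose_sub, hB, transpose_smul, transpose_one]
  calc t₁ = ((μ • (1 : Matrix ι ι K) - B) *ᵥ u₁) ⬝ᵥ u₂ := by
        rw [hu₁, smul_dotProduct, he₂, smul_eq_mul, mul_one]
    _ = u₁ ⬝ᵥ ((μ • (1 : Matrix ι ι K) - B) *ᵥ u₂) := by
        rw [dotProduct_mulVec, ← mulVec_transpose, hC, dotProduct_comm]
    _ = t₂ := by rw [hu₂, dotProduct_smul, dotProduct_comm, he₁, smul_eq_mul, mul_one]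

end Shift

end Eigen

end Matrix

theorem exists_subsingleton_fiber_of_subsingleton_fibers {α : Type*} [Finite α] [Nonempty α]
    {S : Set α} (hS : S.Subsingleton) (R : α → α → Prop)
    (hR : ∀ μ ∉ S, {t | R μ t}.Subsingleton) : ∃ t, {μ | R μ t}.Subsingleton := by
  obtain ⟨l, hl⟩ : ∃ l, S ⊆ {l} := by
    rcases hS.eq_empty_or_singleton with rfl | ⟨l, rfl⟩
    · exact ⟨Classical.arbitrary α, Set.empty_subset _⟩
    · exact ⟨l, subset_rfl⟩
  by_contra! h
  have hex : ∀ t, ∃ μ ≠ l, R μ t := by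
    intro t
    obtain ⟨μ₁, h₁, μ₂, h₂, hne⟩ := h t
    by_cases hμ₁ : μ₁ = l
    · exact ⟨μ₂, fun hμ₂ => hne (hμ₁.trans hμ₂.symm), h₂⟩
    · exact ⟨μ₁, hμ₁, h₁⟩
  choose f hfl hf using hex
  have hinj : f.Injective := fun t₁ t₂ h =>
    hR (f t₁) (fun hS => hfl t₁ (hl hS)) (hf t₁) (h ▸ hf t₂)
  obtain ⟨t, ht⟩ := Finite.injective_iff_surjective.mp hinj l
  exact hfl t ht

lemma adjMat_transpose (n : ℕ) (G : SimpleGraph (Fin n)) : (adjMat n G)ᵀ = adjMat n G :=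
  G.transpose_adjMatrix

lemma map_add_zsmul_allOnes {R : Type*} [Ring R] {n : ℕ} (M : Matrix (Fin n) (Fin n) ℤ) (t : ℤ) :
    (M + t • allOnes n).map (Int.cast : ℤ → R) = M.map Int.cast + (t : R) • of fun _ _ => 1 := by
  ext
  simp [allOnes]

theorem stmt14_general (n p : ℕ) (hp : p.Prime)
    (G : SimpleGraph (Fin n))
    (hrank : ((walkMat (adjMat n G)).map (Int.cast : ℤ → ZMod p)).rank = n - 1) :
    ∃ t₀ : ℤ, ∀ x y : ZMod p,
      ((adjMat n G + t₀ • allOnes n).charpoly.map (Int.castRingHom (ZMod p))).IsRoot x →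
      ((adjMat n G + t₀ • allOnes n).charpoly.map (Int.castRingHom (ZMod p))).IsRoot y →
      x = y := by
  have := Fact.mk hp
  set A := (adjMat n G).map (Int.cast : ℤ → ZMod p)
  have hA : Aᵀ = A := by rw [← transpose_map, adjMat_transpose]
  have hrA : (walkMatrix A).rank = n - 1 :=
    (congrArg rank (walkMatrix_map (Int.castRingHom (ZMod p)) (adjMat n G))).symm.trans hrank
  have hfiber : ∀ μ, ¬ HasEigenvectorOrthOnes A μ →
      {t : ZMod p | (A + t • of fun _ _ => 1).charpoly.IsRoot μ}.Subsingleton :=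
    fun _ hμ _ h₁ _ h₂ => eq_of_isRoot_charpoly_add_smul hA hμ h₁ h₂
  obtain ⟨t, ht⟩ := exists_subsingleton_fiber_of_subsingleton_fibers
    (subsingleton_setOf_hasEigenvectorOrthOnes hA hrA) _ hfiber
  obtain ⟨t₀, rfl⟩ := ZMod.intCast_surjective t
  refine ⟨t₀, ?_⟩
  have hφ : (adjMat n G + t₀ • allOnes n).charpoly.map (Int.castRingHom (ZMod p)) =
      (A + (t₀ : ZMod p) • of fun _ _ => 1).charpoly := by
    rw [← charpoly_map, Int.coe_castRingHom, map_add_zsmul_allOnes]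
  rw [hφ]
  exact fun x y hx hy => ht hx hy

/-- Lemma 9: let `p` be an odd prime, `det W(G) ≠ 0`,
`rank_p W(G) = n - 1`, and `Q ∈ Q(G)` with level `ℓ` divisible by `p`. Then there is an integer
`t₀` such that `φ(x,t₀) = det(xI - A - t₀J)` has no two distinct roots mod `p`. -/
theorem stmt14 (n p : ℕ) (hp : p.Prime) (hpodd : Odd p)
    (G : SimpleGraph (Fin n))
    (hdet : (walkMat (adjMat n G)).det ≠ 0)
    (hrank : ((walkMat (adjMat n G)).map (Int.cast : ℤ → ZMod p)).rank = n - 1)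
    (Q : Matrix (Fin n) (Fin n) ℚ) (hQ : inQSet (adjMat n G) Q)
    (ℓ : ℕ) (hℓ : IsLevel Q ℓ) (hpl : p ∣ ℓ) :
    ∃ t₀ : ℤ, ∀ x y : ZMod p,
      ((adjMat n G + t₀ • allOnes n).charpoly.map (Int.castRingHom (ZMod p))).IsRoot x →
      ((adjMat n G + t₀ • allOnes n).charpoly.map (Int.castRingHom (ZMod p))).IsRoot y →
      x = y :=
  stmt14_general n p hp G hrank
end
end

section
/- Let G be a simple graph on n vertices with adjacency matrix A and complement Ḡ, let J be the all-ones n×n matrix, and let φ(G,x) = det(xI − A) and φ(Ḡ,x) = det(xI − A(Ḡ)). Then for every t, det(xI − A − tJ) = (1+t)·φ(G,x) − (−1)^n · t · φ(Ḡ, −1−x), as an identity of polynomials in x. -/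
/-!
By multilinearity of the determinant in the rows, `det(xI - A - sJ)` is affine in `s`: expanding
each row of `sJ`, the terms taking the all-ones row in two places vanish, so
`det(xI - A - sJ) = φ(G, x) - s·σ(x)` with `σ` independent of `s`. Since `A(Ḡ) = J - I - A`, the
substitution `x ↦ -1 - x` turns `φ(Ḡ, x)` into `(-1)ⁿ det(xI - A + J)`, the case `s = -1`;
eliminating `σ` between `s = t` and `s = -1` gives the identity.
-/

open Matrix Polynomial
open scoped Classical

noncomputable section

section

open Finset

variable {R : Type*} [CommRing R] {ι : Type*} [Fintype ι] [DecidableEq ι]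

theorem AlternatingMap.map_add_const {M N : Type*} [AddCommGroup M] [Module R M]
    [AddCommGroup N] [Module R N] (f : M [⋀^ι]→ₗ[R] N) (b : ι → M) (v : M) :
    f (fun i => b i + v) = f b + ∑ i, f (Function.update b i v) := by
  have h_expand := f.toMultilinearMap.map_add_univ (fun _ => v) b
  rw [AlternatingMap.coe_multilinearMap] at h_expand
  rw [show (fun i => b i + v) = (fun _ => v) + b from funext fun _ => add_comm _ _, h_expand]
  have h_vanish : ∀ s ∈ (univ : Finset (Finset ι)), s ∉ insert ∅ (univ.image singleton) →
      f (s.piecewise (fun _ => v) b) = 0 := by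
    intro s _ hs
    have h_card : 1 < s.card := by
      by_contra! h
      obtain h_empty | h_single : s.card = 0 ∨ s.card = 1 := by omega
      · exact hs (by simp [card_eq_zero.mp h_empty])
      · obtain ⟨i, rfl⟩ := card_eq_one.mp h_single
        simp at hs
    obtain ⟨i, hi, j, hj, hij⟩ := one_lt_card.mp h_card
    exact f.map_eq_zero_of_eq _ (by simp [hi, hj]) hij
  rw [← sum_subset (subset_univ _) h_vanish, sum_insert (by simp),
    sum_image fun _ _ _ _ h => singleton_injective h]
  simp [piecewise_singleton]

theorem Matrix.det_add_smul_ones (B : Matrix ι ι R) (t : R) :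
    (B + t • of fun _ _ => 1).det = B.det + t * ∑ i, (B.updateRow i 1).det := by
  calc (B + t • of fun _ _ => 1).det
      = detRowAlternating (fun i => B i + t • (1 : ι → R)) := rfl
    _ = B.det + ∑ i, t • (B.updateRow i 1).det := by
      have h := detRowAlternating.map_add_const (fun i => B i) (t • (1 : ι → R))
      simp only [AlternatingMap.map_update_smul] at h
      exact h
    _ = B.det + t * ∑ i, (B.updateRow i 1).det := by simp only [smul_eq_mul, mul_sum]

theorem Matrix.charpoly_add_smul_ones (M : Matrix ι ι R) (s : R) :
    (M + s • of fun _ _ => 1).charpoly =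
      M.charpoly - C s * ∑ i, ((charmatrix M).updateRow i 1).det := by
  have h_charmatrix : charmatrix (M + s • of fun _ _ => 1) =
      charmatrix M + (-C s) • of fun _ _ => 1 := by
    ext i j : 1
    simp only [smul_of, charmatrix_apply, add_apply, of_apply, Pi.smul_apply, smul_eq_mul, mul_one,
      map_add, neg_smul, neg_of, Pi.neg_apply]
    ring
  rw [charpoly, h_charmatrix, det_add_smul_ones, ← charpoly]
  ring

theorem Matrix.charpoly_comp_C_sub_X (M : Matrix ι ι R) (c : R) :
    M.charpoly.comp (C c - X) = (-1) ^ Fintype.card ι * (scalar ι c - M).charpoly := by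
  have h_charmatrix : (compRingHom (C c - X)).mapMatrix (charmatrix M) =
      -charmatrix (scalar ι c - M) := by
    ext i j : 1
    by_cases h : i = j <;> simp [h]
    ring
  rw [charpoly, ← coe_compRingHom_apply, RingHom.map_det, h_charmatrix, det_neg, ← charpoly]

end

theorem adjMat_compl (n : ℕ) (G : SimpleGraph (Fin n)) :
    adjMat n Gᶜ = allOnes n - 1 - adjMat n G := by
  ext i j
  by_cases h : i = j
  · subst h
    simp [adjMat, allOnes]
  · by_cases hG : G.Adj i j <;> simp [adjMat, allOnes, h, hG]

/-- `det(xI - A - tJ) = (1+t)·φ(G,x) - (-1)ⁿ·t·φ(Ḡ,-1-x)` as polynomials. -/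
theorem stmt15 (n : ℕ) (G : SimpleGraph (Fin n)) (t : ℤ) :
    (adjMat n G + t • allOnes n).charpoly =
      Polynomial.C (1 + t) * (adjMat n G).charpoly -
      Polynomial.C ((-1) ^ n * t) *
        ((adjMat n Gᶜ).charpoly.comp (-1 - Polynomial.X)) := by
  have h_compl : scalar (Fin n) (-1) - adjMat n Gᶜ = adjMat n G + (-1 : ℤ) • allOnes n := by
    rw [adjMat_compl, map_neg, map_one, neg_one_smul]
    abel
  have h_sign : ((-1) ^ n * (-1) ^ n : ℤ[X]) = 1 := by
    rw [← mul_pow, neg_one_mul, neg_neg, one_pow]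
  rw [show (-1 - X : ℤ[X]) = C (-1) - X by simp, charpoly_comp_C_sub_X, h_compl, allOnes,
    charpoly_add_smul_ones, charpoly_add_smul_ones, Fintype.card_fin]
  simp only [map_add, map_mul, map_pow, map_neg, map_one]
  set σ := ∑ i, ((charmatrix (adjMat n G)).updateRow i 1).det
  linear_combination (C t * ((adjMat n G).charpoly + σ)) * h_sign
end
end
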